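/- Let A be an n×n real positive definite matrix, let S be a random n×p real matrix (distribution given by a probability measure, with the relevant expectations existing), set H := S(SᵀAS)†Sᵀ and G := E[H], and suppose G is positive definite. Then A^{1/2} G A^{1/2} = E[P_{A^{1/2}S}], and with μ := λ_min(E[P_{A^{1/2}S}]) one has the sandwich μ·G⁻¹ ⪯ A ⪯ G⁻¹ in the positive semidefinite order; equivalently, the quadratic f(x) = (1/2)xᵀAx − xᵀb is μ-strongly convex and has 1-Lipschitz gradients with respect to the norm ‖x‖_{G⁻¹} = √(xᵀG⁻¹x). -/

import Mathlib

open scoped BigOperators Matrix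
open MeasureTheory

noncomputable section

/-- `B` is the Moore–Penrose pseudoinverse of `A`. -/
def IsMoorePenrose {m n : ℕ} (A : Matrix (Fin m) (Fin n) ℝ) (B : Matrix (Fin n) (Fin m) ℝ) : Prop :=
  A * B * A = A ∧ B * A * B = B ∧ (A * B)ᵀ = A * B ∧ (B * A)ᵀ = B * A

open Classical in
/-- The Moore–Penrose pseudoinverse (it always exists and is unique). -/
def pinv {m n : ℕ} (A : Matrix (Fin m) (Fin n) ℝ) : Matrix (Fin n) (Fin m) ℝ :=
  if h : ∃ B, IsMoorePenrose A B then h.choose else 0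

/-- The orthogonal projector `P_M = M(MᵀM)†Mᵀ` onto the column space of `M`. -/
def proj {m n : ℕ} (M : Matrix (Fin m) (Fin n) ℝ) : Matrix (Fin m) (Fin m) ℝ :=
  M * pinv (Mᵀ * M) * Mᵀ

/-- Entrywise expectation of a random matrix. -/
def Mexp {Ω : Type*} [MeasurableSpace Ω] (ℙ : Measure Ω) {m n : ℕ}
    (f : Ω → Matrix (Fin m) (Fin n) ℝ) : Matrix (Fin m) (Fin n) ℝ :=
  Matrix.of fun i j => ∫ ω, f ω i j ∂ℙ

/-- The positive semidefinite square root of a positive semidefinite matrix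
(the definition `Matrix.PosSemidef.sqrt` of the older Mathlib, since removed). -/
def Matrix.PosSemidef.sqrt {n : ℕ} {A : Matrix (Fin n) (Fin n) ℝ} (hA : A.PosSemidef) :
    Matrix (Fin n) (Fin n) ℝ :=
  hA.1.eigenvectorUnitary.1 * Matrix.diagonal ((↑) ∘ (√·) ∘ hA.1.eigenvalues) *
    (star hA.1.eigenvectorUnitary : Matrix (Fin n) (Fin n) ℝ)

/-- The set of (real) eigenvalues of a square matrix. -/
def eigs {q : ℕ} (M : Matrix (Fin q) (Fin q) ℝ) : Set ℝ :=
  {r : ℝ | ∃ v : Fin q → ℝ, v ≠ 0 ∧ M.mulVec v = r • v}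

/-!
Write `R = A^{1/2}`. The projector onto the range of `R S` is `R S (Sᵀ A S)† Sᵀ R = R H R`, so
taking expectations gives `R G R = E[P]`. Every orthogonal projector satisfies `P ⪯ 1`, and `μ` is
the bottom of the spectrum of the positive definite matrix `E[P]`, so `μ • 1 ⪯ E[P] ⪯ 1`. Passing to
inverses on the spectrum gives `μ • E[P]⁻¹ ⪯ 1 ⪯ E[P]⁻¹`, and conjugating by `R` turns this into
`μ • G⁻¹ ⪯ A ⪯ G⁻¹`, because `G⁻¹ = R E[P]⁻¹ R`. The two inequalities for `f` are the exact
second-order expansion of a quadratic, with the Hessian `A` compared to `μ • G⁻¹` and to `G⁻¹`.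
-/

open scoped MatrixOrder

section MoorePenrose
variable {m n : ℕ}

theorem IsMoorePenrose.unique {A : Matrix (Fin m) (Fin n) ℝ} {B C : Matrix (Fin n) (Fin m) ℝ}
    (hB : IsMoorePenrose A B) (hC : IsMoorePenrose A C) : B = C := by
  obtain ⟨hB1, hB2, hB3, hB4⟩ := hB
  obtain ⟨hC1, hC2, hC3, hC4⟩ := hC
  have hAB : A * B = A * C :=
    calc A * B = (A * C * A * B)ᵀ := by rw [hC1, hB3]
      _ = (A * B)ᵀ * (A * C)ᵀ := by rw [← Matrix.transpose_mul]; simp only [Matrix.mul_assoc]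
      _ = A * C := by rw [hB3, hC3, ← Matrix.mul_assoc, hB1]
  have hBA : B * A = C * A :=
    calc B * A = (B * (A * C * A))ᵀ := by rw [hC1, hB4]
      _ = (C * A)ᵀ * (B * A)ᵀ := by rw [← Matrix.transpose_mul]; simp only [Matrix.mul_assoc]
      _ = C * A := by rw [hB4, hC4, Matrix.mul_assoc, ← Matrix.mul_assoc A, hB1]
  calc B = B * A * B := hB2.symm
    _ = C * A * C := by rw [hBA, Matrix.mul_assoc, hAB, Matrix.mul_assoc]
    _ = C := hC2

theorem IsMoorePenrose.transpose {A : Matrix (Fin m) (Fin n) ℝ} {B : Matrix (Fin n) (Fin m) ℝ}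
    (hB : IsMoorePenrose A B) : IsMoorePenrose Aᵀ Bᵀ := by
  obtain ⟨h1, h2, h3, h4⟩ := hB
  refine ⟨?_, ?_, ?_, ?_⟩
  · rw [← Matrix.transpose_mul, ← Matrix.transpose_mul, ← Matrix.mul_assoc, h1]
  · rw [← Matrix.transpose_mul, ← Matrix.transpose_mul, ← Matrix.mul_assoc, h2]
  · rw [← Matrix.transpose_mul, h4, h4]
  · rw [← Matrix.transpose_mul, h3, h3]

theorem Matrix.continuousOn_spectrum {ι : Type*} [Fintype ι] [DecidableEq ι] (f : ℝ → ℝ)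
    (M : Matrix ι ι ℝ) : ContinuousOn f (spectrum ℝ M) :=
  Matrix.finite_real_spectrum.continuousOn f

theorem Matrix.IsHermitian.isMoorePenrose_cfc_inv {q : ℕ} {C : Matrix (Fin q) (Fin q) ℝ}
    (hC : C.IsHermitian) : IsMoorePenrose C (cfc (fun x : ℝ => x⁻¹) C) := by
  have hmul (f g : ℝ → ℝ) : cfc f C * cfc g C = cfc (fun x => f x * g x) C :=
    (cfc_mul f g C (C.continuousOn_spectrum f) (C.continuousOn_spectrum g)).symm
  have hid : cfc (fun x : ℝ => x) C = C := cfc_id' ℝ C hC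
  have hmul_left (g : ℝ → ℝ) : C * cfc g C = cfc (fun x => x * g x) C := by
    simpa only [hid] using hmul (fun x => x) g
  have hmul_right (f : ℝ → ℝ) : cfc f C * C = cfc (fun x => f x * x) C := by
    simpa only [hid] using hmul f (fun x => x)
  have htranspose (f : ℝ → ℝ) : (cfc f C)ᵀ = cfc f C := by
    rw [← Matrix.conjTranspose_eq_transpose_of_trivial]; exact (cfc_predicate f C).star_eq
  -- `x * x⁻¹ * x = x` and `x⁻¹ * x * x⁻¹ = x⁻¹` hold at `x = 0` too, since `0⁻¹ = 0`.
  refine ⟨?_, ?_, ?_, ?_⟩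
  · simp only [hmul_left, hmul_right, mul_inv_mul_cancel, hid]
  · rw [hmul_right, hmul]
    simpa only [inv_inv] using congrArg (cfc · C) (funext fun x : ℝ => mul_inv_mul_cancel x⁻¹)
  · rw [hmul_left, htranspose]
  · rw [hmul_right, htranspose]

theorem isMoorePenrose_pinv {q : ℕ} {C : Matrix (Fin q) (Fin q) ℝ} (hC : C.IsHermitian) :
    IsMoorePenrose C (pinv C) := by
  have hex : ∃ B, IsMoorePenrose C B := ⟨_, hC.isMoorePenrose_cfc_inv⟩
  rw [pinv, dif_pos hex]
  exact hex.choose_spec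

theorem pinv_transpose {q : ℕ} {C : Matrix (Fin q) (Fin q) ℝ} (hC : C.IsHermitian) :
    (pinv C)ᵀ = pinv C := by
  have hCt : Cᵀ = C := by rw [← Matrix.conjTranspose_eq_transpose_of_trivial]; exact hC.eq
  have h := (isMoorePenrose_pinv hC).transpose
  rw [hCt] at h
  exact h.unique (isMoorePenrose_pinv hC)

end MoorePenrose

section Projector
variable {m n : ℕ} (M : Matrix (Fin m) (Fin n) ℝ)

theorem Matrix.isHermitian_transpose_mul_self : (Mᵀ * M).IsHermitian := by
  simpa only [Matrix.conjTranspose_eq_transpose_of_trivial] using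
    Matrix.isHermitian_conjTranspose_mul_self M

theorem proj_transpose : (proj M)ᵀ = proj M := by
  rw [proj, Matrix.transpose_mul, Matrix.transpose_mul,
    pinv_transpose M.isHermitian_transpose_mul_self, Matrix.transpose_transpose,
    Matrix.mul_assoc]

theorem proj_mul_self : proj M * proj M = proj M := by
  have h := (isMoorePenrose_pinv M.isHermitian_transpose_mul_self).2.1
  calc proj M * proj M = M * (pinv (Mᵀ * M) * (Mᵀ * M) * pinv (Mᵀ * M)) * Mᵀ := by
        simp only [proj, Matrix.mul_assoc]
    _ = proj M := by rw [h, proj]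

theorem proj_le_one : proj M ≤ 1 := by
  have hsymm : (1 - proj M)ᴴ = 1 - proj M := by
    rw [Matrix.conjTranspose_eq_transpose_of_trivial, Matrix.transpose_sub, Matrix.transpose_one,
      proj_transpose]
  have hidem : (1 - proj M) * (1 - proj M) = 1 - proj M := by
    simp only [Matrix.sub_mul, Matrix.mul_sub, Matrix.one_mul, Matrix.mul_one, proj_mul_self]
    abel
  rw [Matrix.le_iff, ← hidem]
  nth_rewrite 1 [← hsymm]
  exact Matrix.posSemidef_conjTranspose_mul_self _

theorem proj_mul {k : ℕ} (L : Matrix (Fin k) (Fin m) ℝ) :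
    proj (L * M) = L * (M * pinv (Mᵀ * (Lᵀ * L) * M) * Mᵀ) * Lᵀ := by
  simp only [proj, Matrix.transpose_mul, Matrix.mul_assoc]

end Projector

section Mexp
variable {Ω : Type*} [MeasurableSpace Ω] {ℙ : Measure Ω}

theorem Mexp_mul_mul {k m n l : ℕ} (L : Matrix (Fin k) (Fin m) ℝ)
    {f : Ω → Matrix (Fin m) (Fin n) ℝ} (R : Matrix (Fin n) (Fin l) ℝ)
    (hf : ∀ i j, Integrable (fun ω => f ω i j) ℙ) :
    Mexp ℙ (fun ω => L * f ω * R) = L * Mexp ℙ f * R := by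
  ext i j
  simp only [Mexp, Matrix.of_apply, Matrix.mul_apply]
  rw [integral_finsetSum _ fun b _ =>
    (integrable_finsetSum _ fun a _ => (hf a b).const_mul _).mul_const _]
  refine Finset.sum_congr rfl fun b _ => ?_
  rw [integral_mul_const, integral_finsetSum _ fun a _ => (hf a b).const_mul _]
  simp only [integral_const_mul]

theorem Mexp_const [IsProbabilityMeasure ℙ] {m n : ℕ} (M : Matrix (Fin m) (Fin n) ℝ) :
    Mexp ℙ (fun _ => M) = M := by
  ext i j
  simp [Mexp]

theorem Mexp_sub {m n : ℕ} {f g : Ω → Matrix (Fin m) (Fin n) ℝ}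
    (hf : ∀ i j, Integrable (fun ω => f ω i j) ℙ) (hg : ∀ i j, Integrable (fun ω => g ω i j) ℙ) :
    Mexp ℙ (fun ω => f ω - g ω) = Mexp ℙ f - Mexp ℙ g := by
  ext i j
  simp only [Mexp, Matrix.of_apply, Matrix.sub_apply, integral_sub (hf i j) (hg i j)]

theorem dotProduct_Mexp_mulVec {m : ℕ} {f : Ω → Matrix (Fin m) (Fin m) ℝ}
    (hf : ∀ i j, Integrable (fun ω => f ω i j) ℙ) (x y : Fin m → ℝ) :
    x ⬝ᵥ Mexp ℙ f *ᵥ y = ∫ ω, x ⬝ᵥ f ω *ᵥ y ∂ℙ := by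
  simp only [dotProduct, Matrix.mulVec, Mexp, Matrix.of_apply]
  rw [integral_finsetSum _ fun i _ =>
    (integrable_finsetSum _ fun j _ => (hf i j).mul_const _).const_mul _]
  refine Finset.sum_congr rfl fun i _ => ?_
  rw [integral_const_mul, integral_finsetSum _ fun j _ => (hf i j).mul_const _]
  simp only [integral_mul_const]

theorem Mexp_nonneg {m : ℕ} {f : Ω → Matrix (Fin m) (Fin m) ℝ}
    (hf : ∀ i j, Integrable (fun ω => f ω i j) ℙ) (hpos : ∀ ω, 0 ≤ f ω) : 0 ≤ Mexp ℙ f := by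
  have hpsd (ω : Ω) : (f ω).PosSemidef := Matrix.nonneg_iff_posSemidef.mp (hpos ω)
  have hsymm : (Mexp ℙ f).IsHermitian := by
    ext i j
    simp only [Matrix.conjTranspose_apply, star_trivial, Mexp, Matrix.of_apply]
    exact integral_congr_ae (.of_forall fun ω => (hpsd ω).isHermitian.apply i j)
  refine (Matrix.PosSemidef.of_dotProduct_mulVec_nonneg hsymm fun x => ?_).nonneg
  rw [star_trivial, dotProduct_Mexp_mulVec hf]
  refine integral_nonneg fun ω => ?_
  have := (hpsd ω).dotProduct_mulVec_nonneg x
  rwa [star_trivial] at this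

theorem Mexp_mono {m : ℕ} {f g : Ω → Matrix (Fin m) (Fin m) ℝ}
    (hf : ∀ i j, Integrable (fun ω => f ω i j) ℙ) (hg : ∀ i j, Integrable (fun ω => g ω i j) ℙ)
    (hfg : ∀ ω, f ω ≤ g ω) : Mexp ℙ f ≤ Mexp ℙ g := by
  rw [← sub_nonneg, ← Mexp_sub hg hf]
  exact Mexp_nonneg (fun i j => (hg i j).sub (hf i j)) fun ω => sub_nonneg.mpr (hfg ω)

theorem Mexp_proj_le_one [IsProbabilityMeasure ℙ] {m n : ℕ} {M : Ω → Matrix (Fin m) (Fin n) ℝ}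
    (hM : ∀ i j, Integrable (fun ω => proj (M ω) i j) ℙ) : Mexp ℙ (fun ω => proj (M ω)) ≤ 1 :=
  (Mexp_mono (g := fun _ => 1) hM (fun _ _ => integrable_const _)
    fun _ => proj_le_one _).trans_eq (Mexp_const 1)

end Mexp

section Spectrum
variable {ι : Type*} [Fintype ι] [DecidableEq ι]

theorem eigs_eq_spectrum {q : ℕ} (M : Matrix (Fin q) (Fin q) ℝ) : eigs M = spectrum ℝ M := by
  ext r
  rw [← Matrix.spectrum_toLin', ← Module.End.hasEigenvalue_iff_mem_spectrum]
  constructor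
  · rintro ⟨v, hv, hMv⟩
    exact Module.End.hasEigenvalue_of_hasEigenvector ⟨by simpa using hMv, hv⟩
  · intro hr
    obtain ⟨v, hv⟩ := hr.exists_hasEigenvector
    exact ⟨v, hv.2, by simpa using hv.apply_eq_smul⟩

theorem Matrix.mem_spectrum_inv_iff {E : Matrix ι ι ℝ} (hE : IsUnit E) {x : ℝ} :
    x ∈ spectrum ℝ E⁻¹ ↔ x⁻¹ ∈ spectrum ℝ E := by
  lift E to (Matrix ι ι ℝ)ˣ using hE
  rw [← Matrix.coe_units_inv, ← spectrum.map_inv, Set.mem_inv]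

theorem Matrix.PosDef.smul_inv_le_one {E : Matrix ι ι ℝ} (hE : E.PosDef) {c : ℝ} (hc : 0 < c)
    (h : c • 1 ≤ E) : c • E⁻¹ ≤ 1 := by
  have hinv : E⁻¹ ≤ c⁻¹ • 1 := by
    rw [← Algebra.algebraMap_eq_smul_one] at h ⊢
    rw [le_algebraMap_iff_spectrum_le hE.inv.isHermitian.isSelfAdjoint]
    intro x hx
    rw [Matrix.mem_spectrum_inv_iff hE.isUnit] at hx
    have hcx := (algebraMap_le_iff_le_spectrum hE.isHermitian.isSelfAdjoint).mp h _ hx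
    have hx0 := inv_pos.mp (hE.isStrictlyPositive.spectrum_pos hx)
    exact (le_inv_comm₀ hx0 hc).mpr hcx
  rw [Matrix.le_iff] at hinv ⊢
  convert hinv.smul hc.le using 1
  rw [smul_sub, smul_smul, mul_inv_cancel₀ hc.ne', one_smul]

theorem Matrix.PosDef.one_le_inv {E : Matrix ι ι ℝ} (hE : E.PosDef) (h : E ≤ 1) : 1 ≤ E⁻¹ := by
  rw [← map_one (algebraMap ℝ (Matrix ι ι ℝ))] at h ⊢
  rw [algebraMap_le_iff_le_spectrum hE.inv.isHermitian.isSelfAdjoint]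
  intro x hx
  rw [Matrix.mem_spectrum_inv_iff hE.isUnit] at hx
  have hx1 := (le_algebraMap_iff_spectrum_le hE.isHermitian.isSelfAdjoint).mp h _ hx
  have hx0 := hE.isStrictlyPositive.spectrum_pos hx
  exact one_le_inv₀ hx0 |>.mpr hx1 |>.trans_eq (inv_inv x)

theorem Matrix.IsHermitian.smul_one_le_of_mem_lowerBounds_eigs {q : ℕ}
    {E : Matrix (Fin q) (Fin q) ℝ} (hE : E.IsHermitian) {c : ℝ} (hc : c ∈ lowerBounds (eigs E)) :
    c • 1 ≤ E := by
  rw [← Algebra.algebraMap_eq_smul_one, algebraMap_le_iff_le_spectrum hE.isSelfAdjoint]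
  exact fun x hx => hc ((eigs_eq_spectrum E).symm ▸ hx)

end Spectrum

section Sqrt
variable {n : ℕ} {A : Matrix (Fin n) (Fin n) ℝ}

theorem Matrix.PosSemidef.sqrt_eq_cfcSqrt (hA : A.PosSemidef) : hA.sqrt = CFC.sqrt A := by
  rw [CFC.sqrt_eq_cfc, cfc_nnreal_eq_real _ A, hA.1.cfc_eq]
  simp only [Matrix.IsHermitian.cfc, Matrix.PosSemidef.sqrt, Unitary.conjStarAlgAut_apply]
  congr 3
  funext i
  simp [hA.eigenvalues_nonneg i]

theorem Matrix.PosSemidef.sqrt_mul_sqrt (hA : A.PosSemidef) : hA.sqrt * hA.sqrt = A :=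
  hA.sqrt_eq_cfcSqrt ▸ CFC.sqrt_mul_sqrt_self A hA.nonneg

theorem Matrix.PosSemidef.star_sqrt (hA : A.PosSemidef) : star hA.sqrt = hA.sqrt :=
  hA.sqrt_eq_cfcSqrt ▸ (CFC.sqrt_nonneg A).isSelfAdjoint.star_eq

theorem Matrix.PosSemidef.transpose_sqrt (hA : A.PosSemidef) : hA.sqrtᵀ = hA.sqrt := by
  simpa only [Matrix.star_eq_conjTranspose, Matrix.conjTranspose_eq_transpose_of_trivial] using
    hA.star_sqrt

theorem Matrix.PosDef.isUnit_sqrt (hA : A.PosDef) : IsUnit hA.posSemidef.sqrt :=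
  isUnit_of_mul_isUnit_left (hA.posSemidef.sqrt_mul_sqrt ▸ hA.isUnit)

theorem Matrix.inv_eq_mul_inv_conj_mul {R : Matrix (Fin n) (Fin n) ℝ} (hR : IsUnit R)
    (G : Matrix (Fin n) (Fin n) ℝ) : G⁻¹ = R * (R * G * R)⁻¹ * R := by
  have hRdet : IsUnit R.det := (Matrix.isUnit_iff_isUnit_det R).mp hR
  rw [Matrix.mul_inv_rev, Matrix.mul_inv_rev]
  simp only [Matrix.mul_assoc, Matrix.nonsing_inv_mul _ hRdet, Matrix.mul_one,
    Matrix.mul_nonsing_inv_cancel_left _ _ hRdet]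

end Sqrt

section Quadratic
variable {ι : Type*} [Fintype ι] {A : Matrix ι ι ℝ}

theorem quadratic_taylor (hA : A.IsHermitian) (b x y : ι → ℝ) :
    1 / 2 * (y ⬝ᵥ A *ᵥ y) - y ⬝ᵥ b = 1 / 2 * (x ⬝ᵥ A *ᵥ x) - x ⬝ᵥ b + (A *ᵥ x - b) ⬝ᵥ (y - x)
      + 1 / 2 * ((y - x) ⬝ᵥ A *ᵥ (y - x)) := by
  have hsymm : y ⬝ᵥ A *ᵥ x = x ⬝ᵥ A *ᵥ y := by
    rw [Matrix.dotProduct_mulVec, ← Matrix.mulVec_transpose,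
      ← Matrix.conjTranspose_eq_transpose_of_trivial, hA.eq, dotProduct_comm]
  simp only [Matrix.mulVec_sub, dotProduct_sub, sub_dotProduct, dotProduct_comm (A *ᵥ x),
    dotProduct_comm b]
  linarith

theorem quadratic_ge_tangent_of_smul_le (hA : A.IsHermitian) {M : Matrix ι ι ℝ} {c : ℝ}
    (hM : c • M ≤ A) (b x y : ι → ℝ) :
    1 / 2 * (x ⬝ᵥ A *ᵥ x) - x ⬝ᵥ b + (A *ᵥ x - b) ⬝ᵥ (y - x) + c / 2 * ((y - x) ⬝ᵥ M *ᵥ (y - x))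
      ≤ 1 / 2 * (y ⬝ᵥ A *ᵥ y) - y ⬝ᵥ b := by
  have h := (Matrix.le_iff.mp hM).dotProduct_mulVec_nonneg (y - x)
  rw [star_trivial, Matrix.sub_mulVec, dotProduct_sub, Matrix.smul_mulVec, dotProduct_smul,
    smul_eq_mul] at h
  rw [quadratic_taylor hA b x y]
  linarith

theorem quadratic_le_tangent_of_le (hA : A.IsHermitian) {M : Matrix ι ι ℝ} (hM : A ≤ M)
    (b x y : ι → ℝ) :
    1 / 2 * (y ⬝ᵥ A *ᵥ y) - y ⬝ᵥ b
      ≤ 1 / 2 * (x ⬝ᵥ A *ᵥ x) - x ⬝ᵥ b + (A *ᵥ x - b) ⬝ᵥ (y - x)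
        + 1 / 2 * ((y - x) ⬝ᵥ M *ᵥ (y - x)) := by
  have h := (Matrix.le_iff.mp hM).dotProduct_mulVec_nonneg (y - x)
  rw [star_trivial, Matrix.sub_mulVec, dotProduct_sub] at h
  rw [quadratic_taylor hA b x y]
  linarith

end Quadratic

/-- Let `A` be `n×n` positive definite, `S` a random `n×p` matrix,
`H = S(SᵀAS)†Sᵀ`, `G = E[H]` positive definite.  Then `A^{1/2} G A^{1/2} = E[P_{A^{1/2}S}]`,
and with `μ = λ_min(E[P_{A^{1/2}S}])` one has `μ·G⁻¹ ⪯ A ⪯ G⁻¹`; equivalently, for any `b`,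
`f(x) = (1/2)xᵀAx − xᵀb` is `μ`-strongly convex with `1`-Lipschitz gradients in `‖·‖_{G⁻¹}`. -/
theorem stmt19 {Ω : Type*} [MeasurableSpace Ω] (ℙ : Measure Ω) [IsProbabilityMeasure ℙ]
    (n p : ℕ)
    (A : Matrix (Fin n) (Fin n) ℝ) (hA : A.PosDef)
    (S : Ω → Matrix (Fin n) (Fin p) ℝ)
    (H : Ω → Matrix (Fin n) (Fin n) ℝ)
    (hH : ∀ ω, H ω = S ω * pinv ((S ω)ᵀ * A * S ω) * (S ω)ᵀ)
    (hHint : ∀ i j, Integrable (fun ω => H ω i j) ℙ)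
    (hPint : ∀ i j, Integrable (fun ω => proj (hA.posSemidef.sqrt * S ω) i j) ℙ)
    (G : Matrix (Fin n) (Fin n) ℝ) (hG : G = Mexp ℙ H) (hGpd : G.PosDef)
    (μ : ℝ) (hμ : IsLeast (eigs (Mexp ℙ (fun ω => proj (hA.posSemidef.sqrt * S ω)))) μ) :
    hA.posSemidef.sqrt * G * hA.posSemidef.sqrt
        = Mexp ℙ (fun ω => proj (hA.posSemidef.sqrt * S ω)) ∧
    (A - μ • G⁻¹).PosSemidef ∧ (G⁻¹ - A).PosSemidef ∧
    (∀ b x y : Fin n → ℝ,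
      1 / 2 * (x ⬝ᵥ A.mulVec x) - x ⬝ᵥ b + (A.mulVec x - b) ⬝ᵥ (y - x)
          + μ / 2 * ((y - x) ⬝ᵥ G⁻¹.mulVec (y - x))
        ≤ 1 / 2 * (y ⬝ᵥ A.mulVec y) - y ⬝ᵥ b) ∧
    (∀ b x y : Fin n → ℝ,
      1 / 2 * (y ⬝ᵥ A.mulVec y) - y ⬝ᵥ b
        ≤ 1 / 2 * (x ⬝ᵥ A.mulVec x) - x ⬝ᵥ b + (A.mulVec x - b) ⬝ᵥ (y - x)
          + 1 / 2 * ((y - x) ⬝ᵥ G⁻¹.mulVec (y - x))) := by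
  set R := hA.posSemidef.sqrt
  have hRR : R * R = A := hA.posSemidef.sqrt_mul_sqrt
  have hRstar : star R = R := hA.posSemidef.star_sqrt
  have hRt : Rᵀ = R := hA.posSemidef.transpose_sqrt
  set E := Mexp ℙ (fun ω => proj (R * S ω)) with hEdef
  have hRGR : R * G * R = E := by
    rw [hEdef, hG, ← Mexp_mul_mul R R hHint]
    simp only [hH, proj_mul, hRt, hRR]
  have hEpd : E.PosDef := by
    have h := (Matrix.IsUnit.posDef_star_left_conjugate_iff hA.isUnit_sqrt).mpr hGpd
    rwa [hRstar, hRGR] at h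
  have hGinv : G⁻¹ = star R * E⁻¹ * R := by
    rw [← hRGR, hRstar]
    exact Matrix.inv_eq_mul_inv_conj_mul hA.isUnit_sqrt G
  have hAconj : A = star R * 1 * R := by rw [hRstar, Matrix.mul_one, hRR]
  have hlower : μ • G⁻¹ ≤ A := by
    have hμpos : 0 < μ := hEpd.isStrictlyPositive.spectrum_pos (eigs_eq_spectrum E ▸ hμ.1)
    rw [hGinv, hAconj, ← smul_mul_assoc, ← mul_smul_comm]
    exact star_left_conjugate_le_conjugate (hEpd.smul_inv_le_one hμpos
      (hEpd.isHermitian.smul_one_le_of_mem_lowerBounds_eigs hμ.2)) R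
  have hupper : A ≤ G⁻¹ := by
    rw [hGinv, hAconj]
    exact star_left_conjugate_le_conjugate (hEpd.one_le_inv (Mexp_proj_le_one hPint)) R
  exact ⟨hRGR, hlower, hupper, quadratic_ge_tangent_of_smul_le hA.isHermitian hlower,
    quadratic_le_tangent_of_le hA.isHermitian hupper⟩
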